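/- Let ε₆ be a primitive 6th root of unity and ε_n a primitive n-th root of unity in ℂ (n ≥ 2), and set α = ε₆·(ε₆ + ε_n)/(1 − ε_n). Then α is a root of r^{(n)}(X). -/
import Mathlib


open Polynomial

/-- h(i) = 0, -1, -1, 0, 1, 1 according as i = 0,1,2,3,4,5 (mod 6). -/
def hcoef (i : ℕ) : ℤ :=
  match i % 6 with
  | 0 => 0 | 1 => -1 | 2 => -1 | 3 => 0 | 4 => 1 | _ => 1

/-- g(i) = 1, -m, -m-1, -1, m, m+1 according as i = 0,1,2,3,4,5 (mod 6). -/
def gcoef (m : ℚ) (i : ℕ) : ℚ :=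
  match i % 6 with
  | 0 => 1 | 1 => -m | 2 => -m - 1 | 3 => -1 | 4 => m | _ => m + 1

/-- f_m^{(n)}(X) = sum_{i=0}^n C(n,i) X^i g(n-i). -/
noncomputable def fpol (m : ℚ) (n : ℕ) : ℚ[X] :=
  ∑ i ∈ Finset.range (n + 1), C ((n.choose i : ℚ) * gcoef m (n - i)) * X ^ i

/-- r^{(n)}(X) = sum_{i=0}^n C(n,i) X^i h(n-i). -/
noncomputable def rpol (n : ℕ) : ℤ[X] :=
  ∑ i ∈ Finset.range (n + 1), C ((n.choose i : ℤ) * hcoef (n - i)) * X ^ i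

lemma keylem (w : ℂ) (h2 : w ^ 2 = w - 1) :
    ∀ k : ℕ, (2 * w - 1) * (hcoef k : ℂ) = (1 - w) ^ k - w ^ k := by
  have h3 : w ^ 3 = -1 := by linear_combination (w + 1) * h2
  have h6 : w ^ 6 = 1 := by
    have : w ^ 6 = (w ^ 3) ^ 2 := by ring
    rw [this, h3]; norm_num
  have h6' : (1 - w) ^ 6 = 1 := by
    have hsq : (1 - w) ^ 2 = -w := by linear_combination h2
    have : (1 - w) ^ 6 = ((1 - w) ^ 2) ^ 3 := by ring
    rw [this, hsq, show (-w) ^ 3 = -(w ^ 3) by ring, h3]; norm_num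
  intro k
  induction k using Nat.strong_induction_on with
  | _ k ih =>
    match k, ih with
    | 0, _ => norm_num [hcoef]
    | 1, _ => norm_num [hcoef]; ring
    | 2, _ => norm_num [hcoef]; ring
    | 3, _ => norm_num [hcoef]; linear_combination (2 * w - 1) * h2
    | 4, _ => norm_num [hcoef]; linear_combination (4 * w - 2) * h2
    | 5, _ => norm_num [hcoef]; linear_combination (2 * w ^ 3 - 3 * w ^ 2 + 5 * w - 2) * h2
    | (m + 6), ih =>
      have hrec := ih m (by omega)
      have hc : hcoef (m + 6) = hcoef m := by
        unfold hcoef; rw [Nat.add_mod_right]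
      rw [hc, pow_add, pow_add, h6, h6']
      linear_combination hrec

theorem stmt9 (n : ℕ) (hn : 2 ≤ n) (e6 en : ℂ)
    (h6 : IsPrimitiveRoot e6 6) (hen : IsPrimitiveRoot en n) :
    aeval (e6 * (e6 + en) / (1 - en)) (rpol n) = 0 := by
  have hne1 : en ≠ 1 := hen.ne_one (by omega)
  have hd : (1 : ℂ) - en ≠ 0 := sub_ne_zero.mpr (Ne.symm hne1)
  have h66 : e6 ^ 6 = 1 := h6.pow_eq_one
  have h63 : e6 ^ 3 ≠ 1 := h6.pow_ne_one_of_pos_of_lt (by norm_num) (by norm_num)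
  have h62 : e6 ^ 2 ≠ 1 := h6.pow_ne_one_of_pos_of_lt (by norm_num) (by norm_num)
  have h3 : e6 ^ 3 = -1 := by
    have hmul : (e6 ^ 3 - 1) * (e6 ^ 3 + 1) = 0 := by linear_combination h66
    rcases mul_eq_zero.mp hmul with h | h
    · exact absurd (by linear_combination h) h63
    · linear_combination h
  have hne6 : e6 + 1 ≠ 0 := by
    intro h
    exact h62 (by linear_combination (e6 - 1) * h)
  have h2 : e6 ^ 2 = e6 - 1 := by
    have hmul : (e6 + 1) * (e6 ^ 2 - e6 + 1) = 0 := by linear_combination h3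
    rcases mul_eq_zero.mp hmul with h | h
    · exact absurd h hne6
    · linear_combination h
  set α := e6 * (e6 + en) / (1 - en) with hα
  have hα0 : α * (1 - en) = e6 * (e6 + en) := div_mul_cancel₀ _ hd
  have hA : α + (1 - e6) = en * (α + e6) := by
    have key : (α + (1 - e6)) * (1 - en) = en * (α + e6) * (1 - en) := by
      linear_combination (1 - en) * hα0 + (1 - en) * h2
    exact mul_right_cancel₀ hd key
  have hApow : (α + (1 - e6)) ^ n = (α + e6) ^ n := by
    rw [hA, mul_pow, hen.pow_eq_one, one_mul]
  have hne : (2 * e6 - 1) ≠ 0 := by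
    intro h
    have hsq3 : (2 * e6 - 1) ^ 2 = -3 := by linear_combination 4 * h2
    rw [h] at hsq3
    norm_num at hsq3
  have hsum : (2 * e6 - 1) * aeval α (rpol n) = (α + (1 - e6)) ^ n - (α + e6) ^ n := by
    rw [rpol]
    simp only [map_sum, map_mul, map_pow, aeval_C, aeval_X, eq_intCast, map_intCast]
    rw [Finset.mul_sum, add_pow, add_pow, ← Finset.sum_sub_distrib]
    apply Finset.sum_congr rfl
    intro i _
    have hk := keylem e6 h2 (n - i)
    push_cast
    linear_combination (n.choose i : ℂ) * α ^ i * hk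
  rw [hApow, sub_self] at hsum
  exact (mul_eq_zero.mp hsum).resolve_left hne
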